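/- The normalized sup distance d∞(x,y) := ‖x−y‖∞ / max{‖x‖∞, ‖y‖∞} on ℝᵏ (with d∞(0,0) := 0) satisfies the k-relaxed triangle inequality: for all x, y, z ∈ ℝᵏ, d∞(x,y) ≤ k·(d∞(x,z) + d∞(z,y)). -/

import Mathlib

/-!
If `z` is no longer than the longer of `x` and `y`, say `x`, then both denominators on the
right are at most `‖x‖` and the ordinary triangle inequality suffices. Otherwise `‖z‖` is the
largest norm: then in any normed group either `‖z‖ ≥ 2‖x‖`, and the right-hand side is at least
`1` while the left is at most `2`, or `‖z‖ < 2‖x‖`, and dividing by `‖z‖` instead of `‖x‖` costs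
at most a factor `2`. This gives the `2`-relaxed inequality, hence the claim for `k ≥ 2`. On the
line, where the case `k = 1` lives, the right-hand side is `2 - (x + y) / z` for `z > 0`, which
is monotone in `z`, and its value at `z = |x|` already dominates `|x - y| / |x|`.
-/

section NormedAddCommGroup

variable {E : Type*} [NormedAddCommGroup E]

noncomputable def normalizedDist (x y : E) : ℝ := ‖x - y‖ / max ‖x‖ ‖y‖

theorem normalizedDist_self (x : E) : normalizedDist x x = 0 := by
  rw [normalizedDist, sub_self, norm_zero, zero_div]

theorem normalizedDist_comm (x y : E) : normalizedDist x y = normalizedDist y x := by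
  rw [normalizedDist, normalizedDist, norm_sub_rev, max_comm]

theorem normalizedDist_neg (x y : E) : normalizedDist (-x) (-y) = normalizedDist x y := by
  rw [normalizedDist, normalizedDist, neg_sub_neg, norm_sub_rev, norm_neg, norm_neg]

theorem normalizedDist_nonneg (x y : E) : 0 ≤ normalizedDist x y := by
  unfold normalizedDist
  positivity

theorem normalizedDist_le_two (x y : E) : normalizedDist x y ≤ 2 := by
  refine div_le_of_le_mul₀ (by positivity) zero_le_two ?_
  calc ‖x - y‖ ≤ ‖x‖ + ‖y‖ := norm_sub_le x y
    _ ≤ 2 * max ‖x‖ ‖y‖ := by linarith [le_max_left ‖x‖ ‖y‖, le_max_right ‖x‖ ‖y‖]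

theorem normalizedDist_eq_of_norm_le {x y : E} (h : ‖y‖ ≤ ‖x‖) :
    normalizedDist x y = ‖x - y‖ / ‖x‖ := by
  rw [normalizedDist, max_eq_left h]

theorem normalizedDist_eq_zero_of_norm_eq_zero {x y : E} (hy : ‖y‖ ≤ ‖x‖) (hx : ‖x‖ = 0) :
    normalizedDist x y = 0 := by
  rw [normalizedDist_eq_of_norm_le hy, hx, div_zero]

theorem norm_sub_div_le_normalizedDist {x y : E} {r : ℝ} (h : max ‖x‖ ‖y‖ ≤ r) :
    ‖x - y‖ / r ≤ normalizedDist x y := by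
  rcases ((norm_nonneg x).trans (le_max_left _ ‖y‖)).eq_or_lt' with h0 | h0
  · have hx : x = 0 := norm_eq_zero.mp (le_antisymm (h0 ▸ le_max_left _ _) (norm_nonneg x))
    have hy : y = 0 := norm_eq_zero.mp (le_antisymm (h0 ▸ le_max_right _ _) (norm_nonneg y))
    simp [hx, hy, normalizedDist]
  · exact div_le_div_of_nonneg_left (norm_nonneg _) h0 h

theorem normalizedDist_le_mul_add_of_forall_norm_le {c : ℝ}
    (h : ∀ x y z : E, ‖y‖ ≤ ‖x‖ →
      normalizedDist x y ≤ c * (normalizedDist x z + normalizedDist z y))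
    (x y z : E) : normalizedDist x y ≤ c * (normalizedDist x z + normalizedDist z y) := by
  rcases le_total ‖y‖ ‖x‖ with hyx | hxy
  · exact h x y z hyx
  · rw [normalizedDist_comm x y, normalizedDist_comm x z, normalizedDist_comm z y, add_comm]
    exact h y x z hxy

theorem normalizedDist_le_add_of_norm_le {x y z : E} (hyx : ‖y‖ ≤ ‖x‖) (hzx : ‖z‖ ≤ ‖x‖) :
    normalizedDist x y ≤ normalizedDist x z + normalizedDist z y := by
  rw [normalizedDist_eq_of_norm_le hyx, normalizedDist_eq_of_norm_le hzx]
  calc ‖x - y‖ / ‖x‖ ≤ (‖x - z‖ + ‖z - y‖) / ‖x‖ := by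
        gcongr; exact norm_sub_le_norm_sub_add_norm_sub x z y
    _ = ‖x - z‖ / ‖x‖ + ‖z - y‖ / ‖x‖ := add_div _ _ _
    _ ≤ ‖x - z‖ / ‖x‖ + normalizedDist z y := by
      gcongr; exact norm_sub_div_le_normalizedDist (max_le hzx hyx)

theorem normalizedDist_le_two_mul_add_of_norm_le {x y z : E} (hyx : ‖y‖ ≤ ‖x‖)
    (hxz : ‖x‖ ≤ ‖z‖) : normalizedDist x y ≤ 2 * (normalizedDist x z + normalizedDist z y) := by
  rcases (norm_nonneg x).eq_or_lt' with hx | hx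
  · rw [normalizedDist_eq_zero_of_norm_eq_zero hyx hx]
    have := normalizedDist_nonneg x z
    have := normalizedDist_nonneg z y
    positivity
  have hz : 0 < ‖z‖ := hx.trans_le hxz
  rw [normalizedDist_comm x z, normalizedDist_eq_of_norm_le hxz,
    normalizedDist_eq_of_norm_le (hyx.trans hxz), norm_sub_rev z x, ← add_div]
  rcases le_total (2 * ‖x‖) ‖z‖ with hzx | hzx
  · have hsum : ‖z‖ ≤ ‖x - z‖ + ‖z - y‖ := by
      linarith [norm_sub_norm_le z x, norm_sub_rev z x, norm_sub_norm_le z y]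
    calc normalizedDist x y ≤ 2 * 1 := (normalizedDist_le_two x y).trans_eq (mul_one 2).symm
      _ ≤ 2 * ((‖x - z‖ + ‖z - y‖) / ‖z‖) := by gcongr; exact (one_le_div hz).mpr hsum
  · rw [normalizedDist_eq_of_norm_le hyx]
    calc ‖x - y‖ / ‖x‖ ≤ ‖x - y‖ / (‖z‖ / 2) := by gcongr; linarith
      _ = 2 * (‖x - y‖ / ‖z‖) := by field_simp
      _ ≤ 2 * ((‖x - z‖ + ‖z - y‖) / ‖z‖) := by
        gcongr; exact norm_sub_le_norm_sub_add_norm_sub x z y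

theorem normalizedDist_le_two_mul_add (x y z : E) :
    normalizedDist x y ≤ 2 * (normalizedDist x z + normalizedDist z y) := by
  refine normalizedDist_le_mul_add_of_forall_norm_le (fun x y z hyx ↦ ?_) x y z
  rcases le_total ‖z‖ ‖x‖ with hzx | hxz
  · have := normalizedDist_nonneg x z
    have := normalizedDist_nonneg z y
    linarith [normalizedDist_le_add_of_norm_le hyx hzx]
  · exact normalizedDist_le_two_mul_add_of_norm_le hyx hxz

theorem pi_norm_eq_norm_apply_of_subsingleton {ι : Type*} [Fintype ι] [Subsingleton ι]
    (w : ι → E) (i : ι) : ‖w‖ = ‖w i‖ := by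
  have : Nonempty ι := ⟨i⟩
  rw [← pi_norm_const (ι := ι) (w i)]
  exact congrArg norm (funext fun j ↦ congrArg w (Subsingleton.elim j i))

theorem normalizedDist_pi_of_subsingleton {ι : Type*} [Fintype ι] [Subsingleton ι]
    (x y : ι → E) (i : ι) : normalizedDist x y = normalizedDist (x i) (y i) := by
  simp only [normalizedDist, pi_norm_eq_norm_apply_of_subsingleton _ i, Pi.sub_apply]

end NormedAddCommGroup

theorem Real.normalizedDist_le_add_of_abs_le_of_abs_le {x y z : ℝ} (hyx : |y| ≤ |x|) (hxz : |x| ≤ z) :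
    normalizedDist x y ≤ normalizedDist x z + normalizedDist z y := by
  rcases (abs_nonneg x).eq_or_lt' with hx | hx
  · rw [normalizedDist_eq_zero_of_norm_eq_zero hyx hx]
    have := normalizedDist_nonneg x z
    have := normalizedDist_nonneg z y
    positivity
  have hz : 0 < z := hx.trans_le hxz
  have hxz' : |x| ≤ |z| := hxz.trans_eq (abs_of_pos hz).symm
  rw [normalizedDist_eq_of_norm_le hyx, normalizedDist_comm x z,
    normalizedDist_eq_of_norm_le hxz', normalizedDist_eq_of_norm_le (hyx.trans hxz'),
    ← add_div]
  simp only [Real.norm_eq_abs]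
  have hzx : |z - x| = z - x := abs_of_nonneg (by linarith [le_abs_self x])
  have hzy : |z - y| = z - y := abs_of_nonneg (by linarith [le_abs_self y])
  rw [abs_of_pos hz, hzx, hzy, div_le_div_iff₀ hx hz]
  -- `(2z - x - y)|x| - |x - y| z` is the sum of the two nonnegative products below.
  have h1 : 0 ≤ (z - |x|) * (2 * |x| - |x - y|) :=
    mul_nonneg (by linarith) (by linarith [abs_sub x y])
  have h2 : 0 ≤ |x| * (2 * |x| - x - y - |x - y|) :=
    mul_nonneg hx.le (by cases abs_cases (x - y) <;> linarith [le_abs_self x, le_abs_self y])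
  linarith

theorem Real.normalizedDist_le_add (x y z : ℝ) :
    normalizedDist x y ≤ normalizedDist x z + normalizedDist z y := by
  suffices h : normalizedDist x y ≤ 1 * (normalizedDist x z + normalizedDist z y) by
    rwa [one_mul] at h
  refine normalizedDist_le_mul_add_of_forall_norm_le (fun x y z (hyx : |y| ≤ |x|) ↦ ?_) x y z
  rw [one_mul]
  rcases le_total |z| |x| with hzx | hxz
  · exact normalizedDist_le_add_of_norm_le hyx hzx
  rcases le_total 0 z with hz | hz
  · exact Real.normalizedDist_le_add_of_abs_le_of_abs_le hyx (hxz.trans_eq (abs_of_nonneg hz))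
  · rw [← normalizedDist_neg x, ← normalizedDist_neg x, ← normalizedDist_neg z]
    refine Real.normalizedDist_le_add_of_abs_le_of_abs_le (by simpa using hyx) ?_
    simpa [abs_of_nonpos hz] using hxz

/-- The normalized sup distance `d∞(x,y) = ‖x−y‖∞ / max{‖x‖∞,‖y‖∞}` on `ℝᵏ`
(with `d∞(0,0) = 0` via the `0/0 = 0` convention; the norm on `Fin k → ℝ` is the
sup norm) satisfies the `k`-relaxed triangle inequality. -/
theorem stmt3 (k : ℕ) (x y z : Fin k → ℝ) :
    ‖x - y‖ / max ‖x‖ ‖y‖ ≤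
      (k : ℝ) * (‖x - z‖ / max ‖x‖ ‖z‖ + ‖z - y‖ / max ‖z‖ ‖y‖) := by
  change normalizedDist x y ≤ k * (normalizedDist x z + normalizedDist z y)
  match k with
  | 0 => rw [Subsingleton.elim x y, normalizedDist_self, Nat.cast_zero, zero_mul]
  | 1 =>
    rw [Nat.cast_one, one_mul, normalizedDist_pi_of_subsingleton x y 0,
      normalizedDist_pi_of_subsingleton x z 0, normalizedDist_pi_of_subsingleton z y 0]
    exact Real.normalizedDist_le_add (x 0) (y 0) (z 0)
  | k + 2 =>
    have := normalizedDist_nonneg x z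
    have := normalizedDist_nonneg z y
    calc normalizedDist x y ≤ 2 * (normalizedDist x z + normalizedDist z y) :=
          normalizedDist_le_two_mul_add x y z
      _ ≤ (k + 2 : ℕ) * (normalizedDist x z + normalizedDist z y) := by
          gcongr; push_cast; exact le_add_of_nonneg_left k.cast_nonneg
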